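/- arXiv:2011.03804 — 2 statements merged into one kernel-verified Lean document; each statement's English description precedes it below -/
import Mathlib

section
/- Let p be a prime and P > 1 a finite p-group acting on a finite vector space V with C_V(P) = 0. Let σ be an automorphism of V of order p commuting with the P-action such that v^σ ∈ ⟨v⟩ for every v ∈ V. Then there exist g ∈ P and a nonzero v ∈ V with v^σ = v^g and such that the index |P : C_P(v)| is minimal among the indices |P : C_P(w)| over all nonzero w ∈ V. -/
/-!
The hypothesis on `σ` makes it a scalar `κ`, and `addOrderOf σ = p` makes `κ` a primitive `p`-th
root of unity. Take `v ≠ 0` with `|P : C_P(v)|` minimal. By the normalizer condition in the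
`p`-group `P` there is `g` normalizing `C_P(v)` with `g ∉ C_P(v)` but `g ^ p ∈ C_P(v)`. The
eigencomponents `uᵢ = ∑ⱼ κ^(i j) gʲ v` of `v` under `g` are fixed by `C_P(v)`, and since `g` moves
`v` some `uᵢ` with `p ∤ i` is nonzero. On such `uᵢ` the element `g` acts as a primitive `p`-th
root of unity, so a power of `g` acts as `κ`, and `uᵢ` has minimal index as well.
-/

open Finset MulAction

section ScalarAutomorphism

variable {F V : Type*} [Field F] [AddCommGroup V] [Module F V]

/- `σ` is linear over the prime field `ZMod q`, and an endomorphism for which every vector is an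
eigenvector is a homothety. -/
theorem AddEquiv.exists_eq_smul_of_forall_mem_zmultiples [Finite F] (σ : V ≃+ V)
    (hσ : ∀ v, σ v ∈ AddSubgroup.zmultiples v) : ∃ κ : F, ∀ v, σ v = κ • v := by
  set q := ringChar F
  have : Fact q.Prime := ⟨CharP.char_is_prime F q⟩
  let _ : Module (ZMod q) V := Module.compHom V (ZMod.castHom (dvd_refl q) F)
  obtain ⟨a, ha⟩ := LinearMap.exists_eq_smul_id_of_forall_notLinearIndependent
    (f := σ.toAddMonoidHom.toZModLinearMap q) fun v hli => by
      obtain ⟨n, hn⟩ := AddSubgroup.mem_zmultiples_iff.1 (hσ v)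
      have hdep : (n : ZMod q) • v + (-1 : ZMod q) • σ v = 0 := by
        rw [Int.cast_smul_eq_zsmul, hn, neg_one_smul, add_neg_cancel]
      exact neg_ne_zero.2 one_ne_zero (LinearIndependent.pair_iff.1 hli _ _ hdep).2
  exact ⟨ZMod.castHom (dvd_refl q) F a, fun v => LinearMap.congr_fun ha v⟩

/- The additive structure on `V ≃+ V` is that of `AddAut V`: `σ + τ` is the composite `σ ∘ τ`
and `0` is the identity, so `n • σ` is the `n`-th iterate of `σ`. -/
theorem AddEquiv.nsmul_apply_eq_pow_smul {σ : V ≃+ V} {κ : F} (hσ : ∀ v, σ v = κ • v) (n : ℕ)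
    (v : V) : (n • σ) v = κ ^ n • v := by
  induction n with
  | zero => simp
  | succ n ih =>
    rw [succ_nsmul', pow_succ', mul_smul, ← ih, ← hσ]
    rfl

theorem AddEquiv.isPrimitiveRoot_addOrderOf [Nontrivial V] {σ : V ≃+ V} {κ : F}
    (hσ : ∀ v, σ v = κ • v) : IsPrimitiveRoot κ (addOrderOf σ) := by
  have hpow : ∀ n : ℕ, κ ^ n = 1 ↔ n • σ = 0 := fun n => by
    obtain ⟨v, hv⟩ := exists_ne (0 : V)
    refine ⟨fun h => AddEquiv.ext fun w => ?_, fun h => ?_⟩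
    · rw [nsmul_apply_eq_pow_smul hσ, h, one_smul]
      rfl
    · have hv' := nsmul_apply_eq_pow_smul hσ n v
      rw [h] at hv'
      exact smul_left_injective F hv (hv'.symm.trans (one_smul F v).symm)
  rw [IsPrimitiveRoot.iff_def, hpow]
  exact ⟨addOrderOf_nsmul_eq_zero σ, fun l hl => addOrderOf_dvd_of_nsmul_eq_zero ((hpow l).1 hl)⟩

end ScalarAutomorphism

section PGroup

variable {p : ℕ} {P : Type*} [Group P]

theorem IsPGroup.exists_pow_notMem_and_pow_succ_mem (hP : IsPGroup p P) {H : Subgroup P}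
    {g : P} (hg : g ∉ H) : ∃ k, g ^ p ^ k ∉ H ∧ (g ^ p ^ k) ^ p ∈ H := by
  classical
  have hex : ∃ m, g ^ p ^ m ∈ H := by
    obtain ⟨m, hm⟩ := hP g
    exact ⟨m, hm ▸ H.one_mem⟩
  have hpos : Nat.find hex ≠ 0 := fun h0 => hg (by simpa [h0] using Nat.find_spec hex)
  refine ⟨Nat.find hex - 1, Nat.find_min hex (by omega), ?_⟩
  rw [← pow_mul, ← pow_succ, Nat.sub_add_cancel (Nat.pos_of_ne_zero hpos)]
  exact Nat.find_spec hex

theorem IsPGroup.exists_mem_normalizer_notMem_pow_mem [Fact p.Prime] [Finite P]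
    (hP : IsPGroup p P) {H : Subgroup P} (hH : H ≠ ⊤) :
    ∃ g ∈ Subgroup.normalizer (H : Set P), g ∉ H ∧ g ^ p ∈ H := by
  have := hP.isNilpotent
  obtain ⟨g, hgN, hgH⟩ :=
    SetLike.exists_of_lt (Group.normalizerCondition_of_isNilpotent H hH.lt_top)
  obtain ⟨k, hk, hkp⟩ := hP.exists_pow_notMem_and_pow_succ_mem hgH
  exact ⟨g ^ p ^ k, pow_mem hgN _, hk, hkp⟩

end PGroup

section TwistedOrbitSum

variable {F V G : Type*} [Field F] [AddCommGroup V] [Module F V] [Monoid G]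
  [DistribMulAction G V]

/- When `ζ ^ n = 1` and `g ^ n • v = v`, this is `n` times the projection of `v` onto the
`ζ⁻¹`-eigenspace of `g`. -/
def twistedOrbitSum (n : ℕ) (ζ : F) (g : G) (v : V) : V :=
  ∑ j ∈ range n, ζ ^ j • g ^ j • v

theorem sum_twistedOrbitSum_pow {n : ℕ} {κ : F} (hκ : IsPrimitiveRoot κ n) (g : G) (v : V) :
    ∑ i ∈ range n, twistedOrbitSum n (κ ^ i) g v = (n : F) • v := by
  have hgeom : ∀ j ∈ range n, j ≠ 0 → ∑ i ∈ range n, (κ ^ j) ^ i = 0 := fun j hj hj0 => by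
    have hne := hκ.pow_ne_one_of_pos_of_lt hj0 (mem_range.1 hj)
    rw [geom_sum_eq hne, ← pow_mul, mul_comm, pow_mul, hκ.pow_eq_one, one_pow, sub_self,
      zero_div]
  rcases Nat.eq_zero_or_pos n with rfl | hn
  · simp
  simp only [twistedOrbitSum]
  rw [sum_comm]
  simp_rw [← pow_mul, mul_comm _ (_ : ℕ), pow_mul, ← sum_smul]
  rw [sum_eq_single 0 (fun j hj hj0 => by rw [hgeom j hj hj0, zero_smul])
    (fun h => absurd (mem_range.2 hn) h)]
  simp

variable [SMulCommClass G F V]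

theorem pow_smul_pow_smul_of_smul_smul_eq {ζ : F} {g : G} {u : V} (hu : ζ • g • u = u)
    (k : ℕ) : ζ ^ k • g ^ k • u = u := by
  induction k with
  | zero => simp
  | succ k ih => rw [pow_succ, pow_succ, mul_smul, mul_smul, ← smul_comm (g ^ k) ζ, hu, ih]

theorem smul_smul_twistedOrbitSum {n : ℕ} {ζ : F} {g : G} {v : V} (hζ : ζ ^ n = 1)
    (hg : g ^ n • v = v) : ζ • g • twistedOrbitSum n ζ g v = twistedOrbitSum n ζ g v := by
  set f : ℕ → V := fun j => ζ ^ j • g ^ j • v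
  have hshift : ∀ j, ζ • g • f j = f (j + 1) := fun j => by
    simp only [f, smul_comm g (ζ ^ j), smul_smul, ← pow_succ']
  have hperiod : f n = f 0 := by simp only [f, hζ, hg, pow_zero, one_smul]
  have h := sum_range_succ' f n
  rw [sum_range_succ, hperiod, add_left_inj] at h
  change ζ • g • ∑ j ∈ range n, f j = ∑ j ∈ range n, f j
  simp only [smul_sum, hshift]
  exact h.symm

theorem exists_twistedOrbitSum_ne_zero {n : ℕ} [NeZero n] {κ : F} (hκ : IsPrimitiveRoot κ n)
    {g : G} {v : V} (hg : g ^ n • v = v) (hgv : g • v ≠ v) :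
    ∃ i, i ≠ 0 ∧ i < n ∧ twistedOrbitSum n (κ ^ i) g v ≠ 0 := by
  by_contra! h
  have hsum : twistedOrbitSum n (1 : F) g v = (n : F) • v := by
    rw [← sum_twistedOrbitSum_pow hκ g v,
      sum_eq_single 0 (fun i hi hi0 => h i hi0 (mem_range.1 hi))
        (fun h0 => absurd (mem_range.2 (NeZero.pos n)) h0), pow_zero]
  have hfix := smul_smul_twistedOrbitSum (one_pow (M := F) n) hg
  rw [one_smul, hsum, smul_comm] at hfix
  have := hκ.neZero'
  exact hgv (smul_right_injective V (NeZero.ne (n : F)) hfix)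

theorem exists_pow_smul_eq_smul_of_smul_smul_eq {n : ℕ} [NeZero n] {ζ κ : F}
    (hζ : IsPrimitiveRoot ζ n) (hκ : κ ^ n = 1) {g : G} {u : V} (hu : ζ • g • u = u) :
    ∃ k, κ • u = g ^ k • u := by
  obtain ⟨k, -, hk⟩ := hζ.eq_pow_of_pow_eq_one (ξ := κ ^ (n - 1))
    (by rw [← pow_mul, mul_comm, pow_mul, hκ, one_pow])
  refine ⟨k, ?_⟩
  have h := pow_smul_pow_smul_of_smul_smul_eq hu k
  rw [hk] at h
  calc κ • u = κ • κ ^ (n - 1) • g ^ k • u := congrArg (κ • ·) h.symm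
    _ = g ^ k • u := by rw [smul_smul, mul_pow_sub_one (NeZero.ne n), hκ, one_smul]

end TwistedOrbitSum

section StabilizerIndex

variable {F V P : Type*} [Field F] [AddCommGroup V] [Module F V] [Group P]
  [DistribMulAction P V] [SMulCommClass P F V]

theorem stabilizer_le_stabilizer_twistedOrbitSum (n : ℕ) (ζ : F) {g : P} {v : V}
    (hg : g ∈ Subgroup.normalizer (stabilizer P v : Set P)) :
    stabilizer P v ≤ stabilizer P (twistedOrbitSum n ζ g v) := by
  intro h hh
  have hfix : ∀ j : ℕ, h • g ^ j • v = g ^ j • v := fun j => by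
    have := (Subgroup.mem_normalizer_iff''.1 (pow_mem hg j) h).1 hh
    rwa [mem_stabilizer_iff, mul_smul, mul_smul, inv_smul_eq_iff] at this
  rw [mem_stabilizer_iff, twistedOrbitSum, smul_sum]
  simp only [smul_comm h, hfix]

theorem exists_stabilizer_le_and_smul_eq_smul {p : ℕ} [Fact p.Prime] [Finite P]
    (hP : IsPGroup p P) {κ : F} (hκ : IsPrimitiveRoot κ p) {v : V} (hv : ∃ g : P, g • v ≠ v) :
    ∃ u : V, u ≠ 0 ∧ stabilizer P v ≤ stabilizer P u ∧ ∃ g : P, κ • u = g • u := by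
  have hH : stabilizer P v ≠ ⊤ := fun htop => by
    obtain ⟨h, hh⟩ := hv
    exact hh (mem_stabilizer_iff.1 (htop ▸ Subgroup.mem_top h))
  obtain ⟨g, hgN, hgH, hgp⟩ := hP.exists_mem_normalizer_notMem_pow_mem hH
  obtain ⟨i, hi0, hip, hu⟩ := exists_twistedOrbitSum_ne_zero hκ hgp hgH
  have hζ : IsPrimitiveRoot (κ ^ i) p := hκ.pow_of_coprime i <| Nat.Coprime.symm <|
    (Fact.out : p.Prime).coprime_iff_not_dvd.2 (Nat.not_dvd_of_pos_of_lt (by omega) hip)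
  obtain ⟨k, hk⟩ := exists_pow_smul_eq_smul_of_smul_smul_eq hζ hκ.pow_eq_one
    (smul_smul_twistedOrbitSum hζ.pow_eq_one hgp)
  exact ⟨_, hu, stabilizer_le_stabilizer_twistedOrbitSum p _ hgN, g ^ k, hk⟩

end StabilizerIndex

theorem exists_min_index_vector_sigma_eq_conj_general
    {p : ℕ} (hp : p.Prime) {P : Type*} [Group P] [Finite P]
    (hP : IsPGroup p P)
    {F : Type*} [Field F] [Finite F] {V : Type*} [AddCommGroup V] [Module F V]
    [DistribMulAction P V] [SMulCommClass P F V]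
    (hfix : ∀ v : V, (∀ g : P, g • v = v) → v = 0)
    (σ : V ≃+ V) (hσ : addOrderOf σ = p)
    (hcyc : ∀ v : V, σ v ∈ AddSubgroup.zmultiples v) :
    ∃ (g : P) (v : V), v ≠ 0 ∧ σ v = g • v ∧
      ∀ w : V, w ≠ 0 →
        (MulAction.stabilizer P v).index ≤ (MulAction.stabilizer P w).index := by
  have := Fact.mk hp
  obtain ⟨κ, hκ⟩ := σ.exists_eq_smul_of_forall_mem_zmultiples (F := F) hcyc
  have : Nontrivial V := by
    by_contra! hV
    have hσ0 : σ = 0 := AddEquiv.ext fun v => Subsingleton.elim _ _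
    rw [hσ0, addOrderOf_zero] at hσ
    exact hp.one_lt.ne hσ
  have hprim : IsPrimitiveRoot κ p := hσ ▸ AddEquiv.isPrimitiveRoot_addOrderOf hκ
  obtain ⟨v, hv0, hvmin⟩ := WellFounded.has_min
    (InvImage.wf (fun v : V => (stabilizer P v).index) wellFounded_lt) {v | v ≠ 0} (exists_ne 0)
  obtain ⟨u, hu0, hvu, g, hg⟩ := exists_stabilizer_le_and_smul_eq_smul hP hprim
    (not_forall.1 (mt (hfix v) hv0))
  exact ⟨g, u, hu0, (hκ u).trans hg, fun w hw =>
    (Subgroup.index_antitone hvu).trans (not_lt.1 (hvmin w hw))⟩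

/-- If a nontrivial finite `p`-group `P` acts linearly on a finite vector
space `V` with `C_V(P) = 0`, and `σ` is an additive automorphism of `V` of order `p`
commuting with the `P`-action such that `σ v ∈ ⟨v⟩` for all `v`, then there are `g ∈ P`
and a nonzero `v ∈ V` with `σ v = g • v` and `|P : C_P(v)|` minimal among nonzero vectors. -/
theorem exists_min_index_vector_sigma_eq_conj
    {p : ℕ} (hp : p.Prime) {P : Type*} [Group P] [Finite P] [Nontrivial P]
    (hP : IsPGroup p P)
    {F : Type*} [Field F] [Finite F] {V : Type*} [AddCommGroup V] [Module F V] [Finite V]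
    [DistribMulAction P V] [SMulCommClass P F V]
    (hfix : ∀ v : V, (∀ g : P, g • v = v) → v = 0)
    (σ : V ≃+ V) (hσ : addOrderOf σ = p)
    (hcomm : ∀ (g : P) (v : V), σ (g • v) = g • (σ v))
    (hcyc : ∀ v : V, σ v ∈ AddSubgroup.zmultiples v) :
    ∃ (g : P) (v : V), v ≠ 0 ∧ σ v = g • v ∧
      ∀ w : V, w ≠ 0 →
        (MulAction.stabilizer P v).index ≤ (MulAction.stabilizer P w).index :=
  exists_min_index_vector_sigma_eq_conj_general hp hP (F := F) hfix σ hσ hcyc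
end

section
/- Let G be a finite group with a Sylow p-subgroup P, and let M be a minimal normal abelian q-subgroup of G with q ≠ p. If C_M(P) = 1 and PM ⊴ G, then it cannot happen that M ≤ Z(PM); conversely, if C_M(P) > 1 and M is minimal normal, then M ≤ Z(PM) and PM = P × M. -/
open scoped Pointwise


/-- Let `G` be a finite group with Sylow `p`-subgroup `P`, and `M` a
minimal normal abelian `q`-subgroup of `G` with `q ≠ p` and `PM ⊴ G`.  If `C_M(P) = 1`
then `M ≰ Z(PM)`; conversely if `C_M(P) > 1` then `M ≤ Z(PM)` and `PM = P × M`. -/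
theorem minimal_normal_central_in_PM_iff
    {G : Type*} [Group G] [Fintype G] {p q : ℕ} (hp : p.Prime) (hq : q.Prime)
    (hqp : q ≠ p) (P : Sylow p G) (M : Subgroup G) [M.Normal]
    (hMbot : M ≠ ⊥)
    (hmin : ∀ L : Subgroup G, L.Normal → L ≤ M → L = ⊥ ∨ L = M)
    (hMq : IsPGroup q M)
    (hMab : ∀ a ∈ M, ∀ b ∈ M, a * b = b * a)
    (hPM : ((P : Subgroup G) ⊔ M).Normal) :
    ((Subgroup.centralizer (P : Set G) ⊓ M = ⊥) →
      ¬ (M ≤ Subgroup.centralizer (((P : Subgroup G) ⊔ M : Subgroup G) : Set G))) ∧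
    ((Subgroup.centralizer (P : Set G) ⊓ M ≠ ⊥) →
      (M ≤ Subgroup.centralizer (((P : Subgroup G) ⊔ M : Subgroup G) : Set G)) ∧
      (P : Subgroup G) ⊓ M = ⊥ ∧ ∀ x ∈ (P : Subgroup G), ∀ y ∈ M, Commute x y) := by
  have hPsub : (P : Set G) ⊆ (((P : Subgroup G) ⊔ M : Subgroup G) : Set G) := by
    exact_mod_cast SetLike.coe_subset_coe.mpr (le_sup_left : (P : Subgroup G) ≤ _)
  have hCle : Subgroup.centralizer (((P : Subgroup G) ⊔ M : Subgroup G) : Set G) ≤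
      Subgroup.centralizer (P : Set G) := Subgroup.centralizer_le hPsub
  -- C_M(P) ≤ centralizer of PM
  have key : Subgroup.centralizer (P : Set G) ⊓ M ≤
      Subgroup.centralizer (((P : Subgroup G) ⊔ M : Subgroup G) : Set G) := by
    rintro y ⟨hyC, hyM⟩
    rw [Subgroup.mem_centralizer_iff]
    intro h hh
    have hh' : h ∈ ((P : Subgroup G) : Set G) * (M : Set G) := by
      rw [← Subgroup.mul_normal]; exact hh
    obtain ⟨a, ha, b, hb, rfl⟩ := hh'
    have h1 : a * y = y * a := Subgroup.mem_centralizer_iff.mp hyC a ha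
    have h2 : b * y = y * b := hMab b hb y hyM
    rw [mul_assoc, h2, ← mul_assoc, h1, mul_assoc]
  constructor
  · intro h1 hle
    have : M ≤ Subgroup.centralizer (P : Set G) ⊓ M := le_inf (hle.trans hCle) le_rfl
    exact hMbot (le_bot_iff.mp (h1 ▸ this))
  · intro h1
    -- the centralizer of the normal subgroup PM is normal
    have hCnormal : (Subgroup.centralizer
        (((P : Subgroup G) ⊔ M : Subgroup G) : Set G)).Normal := by
      constructor
      intro n hn g
      rw [Subgroup.mem_centralizer_iff] at hn ⊢
      intro h hh
      have hgh : g⁻¹ * h * g ∈ (P : Subgroup G) ⊔ M := by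
        simpa using hPM.conj_mem h hh g⁻¹
      have heq := hn _ hgh
      calc h * (g * n * g⁻¹) = g * (g⁻¹ * h * g * n) * g⁻¹ := by group
        _ = g * (n * (g⁻¹ * h * g)) * g⁻¹ := by rw [heq]
        _ = g * n * g⁻¹ * h := by group
    -- L := C(PM) ⊓ M is normal, nontrivial, ≤ M; minimality gives L = M
    haveI := hCnormal
    let L := Subgroup.centralizer (((P : Subgroup G) ⊔ M : Subgroup G) : Set G) ⊓ M
    have hLnormal : L.Normal := Subgroup.normal_inf_normal _ _
    have hLM : L = M := by
      rcases hmin L hLnormal inf_le_right with h | h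
      · exact absurd (le_bot_iff.mp (h ▸ le_inf key inf_le_right)) h1
      · exact h
    have hMleL : M ≤ L := le_of_eq hLM.symm
    have hMle : M ≤ Subgroup.centralizer (((P : Subgroup G) ⊔ M : Subgroup G) : Set G) :=
      fun y hy => (hMleL hy).1
    refine ⟨hMle, ?_, ?_⟩
    · haveI : Fact p.Prime := ⟨hp⟩
      haveI : Fact q.Prime := ⟨hq⟩
      exact (IsPGroup.disjoint_of_ne p q (Ne.symm hqp) _ _ P.isPGroup' hMq).eq_bot
    · intro x hx y hy
      exact ((Subgroup.mem_centralizer_iff.mp (hCle (hMle hy)) x hx))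
end
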